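/- Let u, v, w be 2×2 complex matrices satisfying the bracket relations ⁅u,v⁆ = w, ⁅v,w⁆ = u and ⁅w,u⁆ = v (where ⁅A,B⁆ = A·B − B·A). Then for all real numbers α and β: exp(α•u) · exp(β•v) = exp(β•(cos α • v + sin α • w)) · exp(α•u). -/

import Mathlib

/-!
The curve `c t = cos t • v + sin t • w` solves `c' = ⁅u, c⁆`, which makes
`exp (t • -u) * c t * exp (t • u)` constant, equal to `c 0 = v`. So conjugation by `exp (α • u)`
rotates `v` into `c α`, and therefore conjugates `exp (β • v)` into `exp (β • c α)`.
-/

open NormedSpace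

section

variable {𝔸 : Type*} [NormedRing 𝔸] [NormedAlgebra ℝ 𝔸]

theorem hasDerivAt_cos_smul_add_sin_smul {u v w : 𝔸} (huv : ⁅u, v⁆ = w) (hwu : ⁅w, u⁆ = v)
    (t : ℝ) :
    HasDerivAt (fun s => Real.cos s • v + Real.sin s • w)
      ⁅u, Real.cos t • v + Real.sin t • w⁆ t := by
  refine (((Real.hasDerivAt_cos t).smul_const v).add
    ((Real.hasDerivAt_sin t).smul_const w)).congr_deriv ?_
  calc -Real.sin t • v + Real.cos t • w = Real.cos t • ⁅u, v⁆ - Real.sin t • ⁅w, u⁆ := by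
        rw [huv, hwu]; module
    _ = ⁅u, Real.cos t • v + Real.sin t • w⁆ := by
      simp only [Ring.lie_def, mul_add, add_mul, mul_smul_comm, smul_mul_assoc, smul_sub]
      abel

variable [CompleteSpace 𝔸]

theorem semiconjBy_exp_smul_of_hasDerivAt_lie {u : 𝔸} {c : ℝ → 𝔸}
    (hc : ∀ t, HasDerivAt c ⁅u, c t⁆ t) (t : ℝ) : SemiconjBy (exp (t • u)) (c 0) (c t) := by
  set F : ℝ → 𝔸 := fun s => exp (s • -u) * c s * exp (s • u)
  have hF : ∀ s, HasDerivAt F 0 s := fun s =>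
    (((hasDerivAt_exp_smul_const (-u) s).mul (hc s)).mul
      (hasDerivAt_exp_smul_const' u s)).congr_deriv
      (by simp only [Pi.mul_apply, Ring.lie_def]; noncomm_ring)
  have hFt : F t = c 0 := by
    rw [is_const_of_deriv_eq_zero (fun s => (hF s).differentiableAt) (fun s => (hF s).deriv) t 0]
    simp [F]
  let +nondep : NormedAlgebra ℚ 𝔸 := .restrictScalars ℚ ℝ 𝔸
  have hinv : exp (t • u) * exp (t • -u) = 1 := by
    rw [smul_neg, ← exp_add_of_commute (Commute.refl _).neg_right, add_neg_cancel, exp_zero]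
  calc exp (t • u) * c 0 = exp (t • u) * exp (t • -u) * c t * exp (t • u) := by
        simp only [← hFt, F, mul_assoc]
    _ = c t * exp (t • u) := by rw [hinv, one_mul]

theorem exp_smul_mul_exp_smul_eq_of_lie {u v w : 𝔸} (huv : ⁅u, v⁆ = w) (hwu : ⁅w, u⁆ = v)
    (α β : ℝ) :
    exp (α • u) * exp (β • v) =
      exp (β • (Real.cos α • v + Real.sin α • w)) * exp (α • u) := by
  let +nondep : NormedAlgebra ℚ 𝔸 := .restrictScalars ℚ ℝ 𝔸
  have h := semiconjBy_exp_smul_of_hasDerivAt_lie (hasDerivAt_cos_smul_add_sin_smul huv hwu) α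
  simp only [Real.cos_zero, Real.sin_zero, one_smul, zero_smul, add_zero] at h
  exact (h.smul_right β).exp_right

end

-- `exp` only depends on the topology, so any Banach-algebra norm on matrices will do.
attribute [local instance] Matrix.linftyOpNormedAddCommGroup Matrix.linftyOpNormedRing
  Matrix.linftyOpNormedAlgebra

theorem su2_exp_conj (u v w : Matrix (Fin 2) (Fin 2) ℂ)
    (huv : ⁅u, v⁆ = w) (hwu : ⁅w, u⁆ = v) (α β : ℝ) :
    NormedSpace.exp (α • u) * NormedSpace.exp (β • v) =
      NormedSpace.exp (β • (Real.cos α • v + Real.sin α • w)) *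
        NormedSpace.exp (α • u) :=
  exp_smul_mul_exp_smul_eq_of_lie huv hwu α β
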